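/- Let m̃(k) = 1 + k₂²/k₁² + (1/2)(β - 1/3)k₁² with β > 1/3. For fixed θ ∈ (1/2, 1), the estimate |m̃(D)^{-1} χ_ε(D)(((χ_ε(D)+I)ζ)((χ_ε(D)-I)ρ))|_{Y^{1+θ}} ≲ ε |ζ|_{Y^{1+θ}} |ρ|_{Y^{1+θ}} holds for all ζ, ρ ∈ Y^{1+θ}. -/

import Mathlib

/-!
On the Fourier side the product becomes a convolution. Outside the cone `C_ε` the bracket
`⟨k⟩ = 1 + k₁² + k₂²/k₁²` is at least `(δ/ε)²`, so `|(χ_ε - 1) ĝ| ≤ (ε/δ) ⟨k⟩^{1/2} |ĝ|`: this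
is the gain of `ε`. Since `m̃ ≳ ⟨k⟩` and `θ ≤ 1`, the symbol `m̃⁻¹` absorbs the weight `⟨k⟩^{1+θ}`,
and Young's inequality `L¹ ⋆ L² ⊆ L²` leaves `‖f̂‖_{L¹} ≲ |f|_{Y^{1+θ}}`. This is Cauchy–Schwarz
against `⟨k⟩^{-(1+θ)}`, which is integrable for `θ > 1/2`: substituting `k₂ = k₁ t` turns it into
`|k₁| (1 + k₁² + t²)^{-(1+θ)} ≤ (1 + k₁² + t²)^{-(1/2+θ)}`.
-/

open MeasureTheory

/-- The anisotropic KP weight `(1 + k₁² + k₂²/k₁²)^r`. -/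
noncomputable def wgt (r : ℝ) (k : ℝ × ℝ) : ℝ := (1 + k.1 ^ 2 + k.2 ^ 2 / k.1 ^ 2) ^ r

/-- The squared `Y^r` norm, computed on the Fourier side. -/
noncomputable def YnormSq (r : ℝ) (g : ℝ × ℝ → ℂ) : ℝ := ∫ k : ℝ × ℝ, wgt r k * ‖g k‖ ^ 2

/-- The KP symbol `m̃(k) = 1 + k₂²/k₁² + ½(β - 1/3)k₁²`. -/
noncomputable def mKP (β : ℝ) (k : ℝ × ℝ) : ℝ :=
  1 + k.2 ^ 2 / k.1 ^ 2 + (1 / 2) * (β - 1 / 3) * k.1 ^ 2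

/-- Characteristic function (as a complex scalar) of the cone `C_ε`. -/
noncomputable def chiC (ε δ : ℝ) (k : ℝ × ℝ) : ℂ :=
  if |k.1| ≤ δ / ε ∧ |k.2 / k.1| ≤ δ / ε then 1 else 0

/-- Convolution on the Fourier side (corresponding to a product in physical space). -/
noncomputable def conv (f g : ℝ × ℝ → ℂ) : ℝ × ℝ → ℂ := fun k => ∫ j : ℝ × ℝ, f j * g (k - j)

open scoped ENNReal NNReal

lemma lintegral_mul_sq_le {α : Type*} [MeasurableSpace α] {μ : Measure α} {u v : α → ℝ≥0∞}
    (hu : AEMeasurable u μ) (hv : AEMeasurable v μ) :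
    (∫⁻ a, u a * v a ∂μ) ^ 2 ≤ (∫⁻ a, u a ∂μ) * ∫⁻ a, u a * v a ^ 2 ∂μ := by
  have hsq : ∀ x : ℝ≥0∞, (x ^ (1 / 2 : ℝ)) ^ 2 = x := fun x => by
    rw [← ENNReal.rpow_natCast, ← ENNReal.rpow_mul]; norm_num
  have hsplit : ∀ a, u a * v a = u a ^ (1 / 2 : ℝ) * (u a * v a ^ 2) ^ (1 / 2 : ℝ) := fun a => by
    rw [ENNReal.mul_rpow_of_nonneg _ _ (by norm_num), ← mul_assoc, ← sq, hsq,
      ← ENNReal.rpow_natCast, ← ENNReal.rpow_mul]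
    norm_num
  calc (∫⁻ a, u a * v a ∂μ) ^ 2
      ≤ ((∫⁻ a, u a ∂μ) ^ (1 / 2 : ℝ) * (∫⁻ a, u a * v a ^ 2 ∂μ) ^ (1 / 2 : ℝ)) ^ 2 := by
        simp_rw [hsplit]
        gcongr
        exact ENNReal.lintegral_mul_norm_pow_le hu (hu.mul (hv.pow_const 2))
          (by norm_num) (by norm_num) (by norm_num)
    _ = (∫⁻ a, u a ∂μ) * ∫⁻ a, u a * v a ^ 2 ∂μ := by rw [mul_pow, hsq, hsq]

lemma sq_lintegral_le_lintegral_inv_mul_lintegral {α : Type*} [MeasurableSpace α]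
    {μ : Measure α} {g : α → ℝ≥0∞} {w : α → ℝ} (hg : AEMeasurable g μ) (hw : Measurable w)
    (hw_pos : ∀ a, 0 < w a) :
    (∫⁻ a, g a ∂μ) ^ 2 ≤
      (∫⁻ a, ENNReal.ofReal (w a)⁻¹ ∂μ) * ∫⁻ a, ENNReal.ofReal (w a) * g a ^ 2 ∂μ := by
  have hcancel : ∀ a, ENNReal.ofReal (w a)⁻¹ * ENNReal.ofReal (w a) = 1 := fun a => by
    rw [← ENNReal.ofReal_mul (inv_nonneg.mpr (hw_pos a).le), inv_mul_cancel₀ (hw_pos a).ne',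
      ENNReal.ofReal_one]
  have h := lintegral_mul_sq_le (μ := μ) (u := fun a => ENNReal.ofReal (w a)⁻¹)
    (v := fun a => ENNReal.ofReal (w a) * g a) (by fun_prop) (by fun_prop)
  simp only [← mul_assoc, hcancel, one_mul, mul_pow, sq (ENNReal.ofReal (w _))] at h
  exact h

lemma lintegral_lconvolution_sq_le {G : Type*} [MeasurableSpace G] [AddGroup G]
    [MeasurableAdd₂ G] [MeasurableNeg G] {μ : Measure G} [SFinite μ] [μ.IsAddLeftInvariant]
    {F H : G → ℝ≥0∞} (hF : Measurable F) (hH : Measurable H) :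
    ∫⁻ x, (F ⋆ₗ[μ] H) x ^ 2 ∂μ ≤ (∫⁻ y, F y ∂μ) ^ 2 * ∫⁻ y, H y ^ 2 ∂μ := by
  have hFH : Measurable fun p : G × G => F p.2 * H (-p.2 + p.1) ^ 2 := by fun_prop
  calc ∫⁻ x, (F ⋆ₗ[μ] H) x ^ 2 ∂μ
      ≤ ∫⁻ x, (∫⁻ y, F y ∂μ) * ∫⁻ y, F y * H (-y + x) ^ 2 ∂μ ∂μ :=
        lintegral_mono fun x => lintegral_mul_sq_le hF.aemeasurable (by fun_prop)
    _ = (∫⁻ y, F y ∂μ) * ∫⁻ y, F y * ∫⁻ x, H (-y + x) ^ 2 ∂μ ∂μ := by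
        rw [lintegral_const_mul _ hFH.lintegral_prod_right',
          lintegral_lintegral_swap hFH.aemeasurable]
        congr 1
        exact lintegral_congr fun y =>
          lintegral_const_mul (F y) (f := fun x => H (-y + x) ^ 2) (by fun_prop)
    _ = (∫⁻ y, F y ∂μ) ^ 2 * ∫⁻ y, H y ^ 2 ∂μ := by
        simp_rw [lintegral_add_left_eq_self (fun x => H x ^ 2)]
        rw [lintegral_mul_const _ hF, sq, mul_assoc]

noncomputable def kpBracket (k : ℝ × ℝ) : ℝ := 1 + k.1 ^ 2 + k.2 ^ 2 / k.1 ^ 2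

lemma wgt_eq_kpBracket_rpow (r : ℝ) (k : ℝ × ℝ) : wgt r k = kpBracket k ^ r := rfl

lemma one_le_kpBracket (k : ℝ × ℝ) : 1 ≤ kpBracket k := by
  unfold kpBracket; have := div_nonneg (sq_nonneg k.2) (sq_nonneg k.1); nlinarith [sq_nonneg k.1]

lemma kpBracket_pos (k : ℝ × ℝ) : 0 < kpBracket k := one_pos.trans_le (one_le_kpBracket k)

@[fun_prop]
lemma measurable_kpBracket : Measurable kpBracket := by unfold kpBracket; fun_prop

lemma wgt_nonneg (r : ℝ) (k : ℝ × ℝ) : 0 ≤ wgt r k := Real.rpow_nonneg (kpBracket_pos k).le r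

@[fun_prop]
lemma measurable_wgt (r : ℝ) : Measurable (wgt r) := measurable_kpBracket.pow_const r

lemma sq_le_kpBracket_outside_cone {R : ℝ} {k : ℝ × ℝ} (hR : 0 ≤ R)
    (hk : ¬(|k.1| ≤ R ∧ |k.2 / k.1| ≤ R)) : R ^ 2 ≤ kpBracket k := by
  have h1 := sq_nonneg k.1
  have h2 : 0 ≤ k.2 ^ 2 / k.1 ^ 2 := div_nonneg (sq_nonneg _) (sq_nonneg _)
  unfold kpBracket
  rcases not_and_or.mp hk with hk | hk
  · nlinarith [sq_abs k.1, abs_nonneg k.1, not_le.mp hk]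
  · nlinarith [sq_abs (k.2 / k.1), div_pow k.2 k.1 2, abs_nonneg (k.2 / k.1), not_le.mp hk]

lemma abs_mul_rpow_neg_le_one_add_norm_sq_rpow {s : ℝ} (hs : 1 / 2 ≤ s) (x t : ℝ) :
    |x| * (1 + x ^ 2 + t ^ 2) ^ (-s) ≤ (1 + ‖(x, t)‖ ^ 2) ^ (-(2 * s - 1) / 2) := by
  have hA : 0 < 1 + x ^ 2 + t ^ 2 := by positivity
  have hx : |x| ≤ (1 + x ^ 2 + t ^ 2) ^ (1 / 2 : ℝ) := by
    rw [← Real.sqrt_eq_rpow, ← Real.sqrt_sq_eq_abs]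
    exact Real.sqrt_le_sqrt (by nlinarith [sq_nonneg t])
  have hnorm : 1 + ‖(x, t)‖ ^ 2 ≤ 1 + x ^ 2 + t ^ 2 := by
    rcases max_choice |x| |t| with h | h <;>
      simp only [Prod.norm_mk, Real.norm_eq_abs, h, sq_abs] <;>
      nlinarith [sq_nonneg x, sq_nonneg t]
  calc |x| * (1 + x ^ 2 + t ^ 2) ^ (-s)
      ≤ (1 + x ^ 2 + t ^ 2) ^ (1 / 2 : ℝ) * (1 + x ^ 2 + t ^ 2) ^ (-s) := by gcongr
    _ = (1 + x ^ 2 + t ^ 2) ^ (-(2 * s - 1) / 2) := by rw [← Real.rpow_add hA]; ring_nf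
    _ ≤ (1 + ‖(x, t)‖ ^ 2) ^ (-(2 * s - 1) / 2) :=
      Real.rpow_le_rpow_of_nonpos (by positivity) hnorm (by linarith)

lemma lintegral_kpBracket_rpow_neg_fiber (s : ℝ) {x : ℝ} (hx : x ≠ 0) :
    ∫⁻ y, ENNReal.ofReal (kpBracket (x, y) ^ (-s)) =
      ∫⁻ t, ENNReal.ofReal (|x| * (1 + x ^ 2 + t ^ 2) ^ (-s)) := by
  calc ∫⁻ y, ENNReal.ofReal (kpBracket (x, y) ^ (-s))
      = ∫⁻ y, ENNReal.ofReal ((1 + x ^ 2 + (x⁻¹ * y) ^ 2) ^ (-s)) := by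
        simp only [kpBracket, mul_pow, inv_pow, div_eq_inv_mul]
    _ = ENNReal.ofReal |x| * ∫⁻ t, ENNReal.ofReal ((1 + x ^ 2 + t ^ 2) ^ (-s)) := by
        rw [← lintegral_map (f := fun t => ENNReal.ofReal ((1 + x ^ 2 + t ^ 2) ^ (-s)))
          (by fun_prop) (measurable_const_mul x⁻¹), Real.map_volume_mul_left (inv_ne_zero hx),
          lintegral_smul_measure, inv_inv, smul_eq_mul]
    _ = ∫⁻ t, ENNReal.ofReal (|x| * (1 + x ^ 2 + t ^ 2) ^ (-s)) := by
        rw [← lintegral_const_mul _ (by fun_prop)]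
        simp_rw [ENNReal.ofReal_mul (abs_nonneg x)]

lemma lintegral_kpBracket_rpow_neg_lt_top {s : ℝ} (hs : 3 / 2 < s) :
    ∫⁻ k, ENNReal.ofReal (kpBracket k ^ (-s)) < ∞ := by
  set G : ℝ × ℝ → ℝ≥0∞ := fun p => ENNReal.ofReal ((1 + ‖p‖ ^ 2) ^ (-(2 * s - 1) / 2))
  have hG : ∫⁻ p, G p < ∞ :=
    (integrable_rpow_neg_one_add_norm_sq (μ := volume) (E := ℝ × ℝ) (by
      simp only [Module.finrank_prod, Module.finrank_self, Nat.reduceAdd, Nat.cast_ofNat]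
      linarith)).lintegral_lt_top
  have hfiber : ∀ x : ℝ, x ≠ 0 →
      ∫⁻ y, ENNReal.ofReal (kpBracket (x, y) ^ (-s)) ≤ ∫⁻ t, G (x, t) := fun x hx => by
    rw [lintegral_kpBracket_rpow_neg_fiber s hx]
    exact lintegral_mono fun t =>
      ENNReal.ofReal_le_ofReal (abs_mul_rpow_neg_le_one_add_norm_sq_rpow (by linarith) x t)
  calc ∫⁻ k, ENNReal.ofReal (kpBracket k ^ (-s))
      = ∫⁻ x, ∫⁻ y, ENNReal.ofReal (kpBracket (x, y) ^ (-s)) :=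
        lintegral_prod _ (by fun_prop)
    _ ≤ ∫⁻ x, ∫⁻ t, G (x, t) := lintegral_mono_ae ((volume.ae_ne 0).mono hfiber)
    _ = ∫⁻ p, G p := (lintegral_prod _ (by fun_prop)).symm
    _ < ∞ := hG

lemma norm_chiC_le_one (ε δ : ℝ) (k : ℝ × ℝ) : ‖chiC ε δ k‖ ≤ 1 := by
  unfold chiC; split_ifs <;> simp

lemma norm_chiC_add_one_le (ε δ : ℝ) (k : ℝ × ℝ) : ‖chiC ε δ k + 1‖ ≤ 2 :=
  (norm_add_le _ _).trans (by linarith [norm_chiC_le_one ε δ k, norm_one (α := ℂ)])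

lemma norm_chiC_sub_one_le {ε δ : ℝ} (hε : 0 < ε) (hδ : 0 < δ) (k : ℝ × ℝ) :
    ‖chiC ε δ k - 1‖ ≤ ε / δ * √(kpBracket k) := by
  unfold chiC
  split_ifs with hk
  · simp only [sub_self, norm_zero]; positivity
  · have hR : δ / ε ≤ √(kpBracket k) :=
      Real.le_sqrt_of_sq_le (sq_le_kpBracket_outside_cone (by positivity) hk)
    calc ‖(0 : ℂ) - 1‖ = ε / δ * (δ / ε) := by field_simp; simp
      _ ≤ ε / δ * √(kpBracket k) := by gcongr

lemma exists_mul_kpBracket_le_mKP {β : ℝ} (hβ : 1 / 3 < β) :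
    ∃ c > 0, ∀ k, c * kpBracket k ≤ mKP β k := by
  refine ⟨min 1 ((β - 1 / 3) / 2), lt_min one_pos (by linarith), fun k => ?_⟩
  have h1 : min 1 ((β - 1 / 3) / 2) * k.1 ^ 2 ≤ (β - 1 / 3) / 2 * k.1 ^ 2 := by
    gcongr; exact min_le_right _ _
  have h2 : min 1 ((β - 1 / 3) / 2) * (1 + k.2 ^ 2 / k.1 ^ 2) ≤ 1 + k.2 ^ 2 / k.1 ^ 2 := by
    have := div_nonneg (sq_nonneg k.2) (sq_nonneg k.1)
    exact mul_le_of_le_one_left (by positivity) (min_le_left _ _)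
  unfold kpBracket mKP
  linarith

lemma wgt_mul_inv_sq_le {c m r : ℝ} {k : ℝ × ℝ} (hc : 0 < c) (hr : r ≤ 2)
    (hm : c * kpBracket k ≤ m) : wgt r k * (m⁻¹) ^ 2 ≤ (c⁻¹) ^ 2 := by
  have hb := kpBracket_pos k
  calc wgt r k * (m⁻¹) ^ 2 ≤ kpBracket k ^ 2 * ((c * kpBracket k)⁻¹) ^ 2 := by
        gcongr
        · rw [wgt_eq_kpBracket_rpow, ← Real.rpow_two]
          exact Real.rpow_le_rpow_of_exponent_le (one_le_kpBracket k) hr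
        · exact inv_nonneg.mpr ((mul_pos hc hb).le.trans hm)
    _ = (c⁻¹) ^ 2 := by field_simp

noncomputable def eYnormSq (r : ℝ) (g : ℝ × ℝ → ℂ) : ℝ≥0∞ :=
  ∫⁻ k, ENNReal.ofReal (wgt r k) * ‖g k‖ₑ ^ 2

lemma ofReal_wgt_mul_sq (r : ℝ) (g : ℝ × ℝ → ℂ) (k : ℝ × ℝ) :
    ENNReal.ofReal (wgt r k * ‖g k‖ ^ 2) = ENNReal.ofReal (wgt r k) * ‖g k‖ₑ ^ 2 := by
  rw [ENNReal.ofReal_mul (wgt_nonneg r k), ENNReal.ofReal_pow (norm_nonneg _), ofReal_norm]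

lemma YnormSq_eq_toReal_eYnormSq {r : ℝ} {g : ℝ × ℝ → ℂ} (hg : AEStronglyMeasurable g) :
    YnormSq r g = (eYnormSq r g).toReal := by
  rw [YnormSq, integral_eq_lintegral_of_nonneg_ae
    (Filter.Eventually.of_forall fun k => mul_nonneg (wgt_nonneg r k) (sq_nonneg _))
    ((measurable_wgt r).aestronglyMeasurable.mul (hg.norm.pow 2))]
  simp_rw [ofReal_wgt_mul_sq, eYnormSq]

lemma ofReal_YnormSq {r : ℝ} {g : ℝ × ℝ → ℂ}
    (hg : Integrable fun k => wgt r k * ‖g k‖ ^ 2) :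
    ENNReal.ofReal (YnormSq r g) = eYnormSq r g := by
  rw [YnormSq, ofReal_integral_eq_lintegral_ofReal hg
    (Filter.Eventually.of_forall fun k => mul_nonneg (wgt_nonneg r k) (sq_nonneg _))]
  simp_rw [ofReal_wgt_mul_sq, eYnormSq]

lemma eYnormSq_mono {r r' : ℝ} (hr : r ≤ r') (g : ℝ × ℝ → ℂ) :
    eYnormSq r g ≤ eYnormSq r' g :=
  lintegral_mono fun k => by
    gcongr
    exact Real.rpow_le_rpow_of_exponent_le (one_le_kpBracket k) hr

lemma sq_lintegral_enorm_le_mul_eYnormSq (r : ℝ) {f : ℝ × ℝ → ℂ} (hf : Measurable f) :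
    (∫⁻ k, ‖f k‖ₑ) ^ 2 ≤ (∫⁻ k, ENNReal.ofReal (kpBracket k ^ (-r))) * eYnormSq r f := by
  refine (sq_lintegral_le_lintegral_inv_mul_lintegral hf.enorm.aemeasurable (measurable_wgt r)
    (fun k => Real.rpow_pos_of_pos (kpBracket_pos k) r)).trans_eq ?_
  congr 1
  exact lintegral_congr fun k => by
    rw [wgt_eq_kpBracket_rpow, Real.rpow_neg (kpBracket_pos k).le]

@[fun_prop]
lemma measurable_chiC (ε δ : ℝ) : Measurable (chiC ε δ) := by
  have : MeasurableSet ({k : ℝ × ℝ | |k.1| ≤ δ / ε} ∩ {k | |k.2 / k.1| ≤ δ / ε}) :=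
    (measurableSet_le (by fun_prop) (by fun_prop)).inter
      (measurableSet_le (by fun_prop) (by fun_prop))
  exact Measurable.ite this measurable_const measurable_const

lemma measurable_conv {f g : ℝ × ℝ → ℂ} (hf : Measurable f) (hg : Measurable g) :
    Measurable (conv f g) :=
  (by fun_prop : Measurable fun p : (ℝ × ℝ) × (ℝ × ℝ) => f p.2 * g (p.1 - p.2))
    |>.stronglyMeasurable.integral_prod_right'.measurable

lemma enorm_conv_le_lconvolution (f g : ℝ × ℝ → ℂ) (k : ℝ × ℝ) :
    ‖conv f g k‖ₑ ≤ ((fun j => ‖f j‖ₑ) ⋆ₗ fun j => ‖g j‖ₑ) k := by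
  calc ‖conv f g k‖ₑ ≤ ∫⁻ j, ‖f j * g (k - j)‖ₑ := enorm_integral_le_lintegral_enorm _
    _ = ((fun j => ‖f j‖ₑ) ⋆ₗ fun j => ‖g j‖ₑ) k := by
        simp_rw [lconvolution_def, enorm_mul, neg_add_eq_sub]

/-- The Fourier transform of `m̃(D)⁻¹ χ_ε(D)(((χ_ε(D)+I)ζ)((χ_ε(D)-I)ρ))` for `f = ζ̂`, `g = ρ̂`. -/
noncomputable def kpBilin (β ε δ : ℝ) (f g : ℝ × ℝ → ℂ) (k : ℝ × ℝ) : ℂ :=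
  ((mKP β k : ℝ) : ℂ)⁻¹ * chiC ε δ k *
    conv (fun j => (chiC ε δ j + 1) * f j) (fun j => (chiC ε δ j - 1) * g j) k

lemma measurable_kpBilin (β ε δ : ℝ) {f g : ℝ × ℝ → ℂ} (hf : Measurable f)
    (hg : Measurable g) : Measurable (kpBilin β ε δ f g) := by
  have : Measurable (mKP β) := by unfold mKP; fun_prop
  exact (by fun_prop : Measurable fun k => ((mKP β k : ℝ) : ℂ)⁻¹ * chiC ε δ k).mul
    (measurable_conv (by fun_prop) (by fun_prop))

lemma enorm_conv_chiC_le {ε δ : ℝ} (hε : 0 < ε) (hδ : 0 < δ) (f g : ℝ × ℝ → ℂ)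
    (k : ℝ × ℝ) :
    ‖conv (fun j => (chiC ε δ j + 1) * f j) (fun j => (chiC ε δ j - 1) * g j) k‖ₑ ≤
      ENNReal.ofReal (2 * ε / δ) *
        ((fun j => ‖f j‖ₑ) ⋆ₗ fun j => ENNReal.ofReal √(kpBracket j) * ‖g j‖ₑ) k := by
  refine (enorm_conv_le_lconvolution _ _ k).trans ?_
  simp_rw [lconvolution_def, ← lintegral_const_mul' _ _ ENNReal.ofReal_ne_top]
  refine lintegral_mono fun j => ?_
  simp only [← ofReal_norm, ← ENNReal.ofReal_mul (norm_nonneg _),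
    ← ENNReal.ofReal_mul (Real.sqrt_nonneg _),
    ← ENNReal.ofReal_mul (by positivity : 0 ≤ 2 * ε / δ)]
  refine ENNReal.ofReal_le_ofReal ?_
  rw [norm_mul, norm_mul]
  calc ‖chiC ε δ j + 1‖ * ‖f j‖ * (‖chiC ε δ (-j + k) - 1‖ * ‖g (-j + k)‖)
      ≤ 2 * ‖f j‖ * (ε / δ * √(kpBracket (-j + k)) * ‖g (-j + k)‖) := by
        gcongr
        · exact norm_chiC_add_one_le ε δ j
        · exact norm_chiC_sub_one_le hε hδ _
    _ = 2 * ε / δ * (‖f j‖ * (√(kpBracket (-j + k)) * ‖g (-j + k)‖)) := by ring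

lemma ofReal_wgt_mul_enorm_kpBilin_sq_le {β ε δ c r : ℝ} (hε : 0 < ε) (hδ : 0 < δ)
    (hc : 0 < c) (hr : r ≤ 2) (hm : ∀ k, c * kpBracket k ≤ mKP β k) (f g : ℝ × ℝ → ℂ)
    (k : ℝ × ℝ) :
    ENNReal.ofReal (wgt r k) * ‖kpBilin β ε δ f g k‖ₑ ^ 2 ≤
      ENNReal.ofReal ((2 * ε / (c * δ)) ^ 2) *
        ((fun j => ‖f j‖ₑ) ⋆ₗ fun j => ENNReal.ofReal √(kpBracket j) * ‖g j‖ₑ) k ^ 2 := by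
  set u := conv (fun j => (chiC ε δ j + 1) * f j) (fun j => (chiC ε δ j - 1) * g j) k
  have hm_pos : 0 < mKP β k := (mul_pos hc (kpBracket_pos k)).trans_le (hm k)
  have hw := wgt_nonneg r k
  have hnorm : ‖kpBilin β ε δ f g k‖ ≤ (mKP β k)⁻¹ * ‖u‖ := by
    rw [kpBilin, norm_mul, norm_mul, norm_inv, Complex.norm_real, Real.norm_of_nonneg hm_pos.le]
    gcongr
    exact mul_le_of_le_one_right (by positivity) (norm_chiC_le_one ε δ k)
  calc ENNReal.ofReal (wgt r k) * ‖kpBilin β ε δ f g k‖ₑ ^ 2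
      ≤ ENNReal.ofReal ((c⁻¹) ^ 2) * ‖u‖ₑ ^ 2 := by
        rw [← ofReal_norm, ← ofReal_norm, ← ENNReal.ofReal_pow (norm_nonneg _),
          ← ENNReal.ofReal_pow (norm_nonneg _), ← ENNReal.ofReal_mul (wgt_nonneg r k),
          ← ENNReal.ofReal_mul (by positivity)]
        refine ENNReal.ofReal_le_ofReal ?_
        calc wgt r k * ‖kpBilin β ε δ f g k‖ ^ 2 ≤ wgt r k * ((mKP β k)⁻¹ * ‖u‖) ^ 2 := by
              gcongr
          _ = wgt r k * ((mKP β k)⁻¹) ^ 2 * ‖u‖ ^ 2 := by ring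
          _ ≤ (c⁻¹) ^ 2 * ‖u‖ ^ 2 := by gcongr; exact wgt_mul_inv_sq_le hc hr (hm k)
    _ ≤ ENNReal.ofReal ((c⁻¹) ^ 2) * (ENNReal.ofReal (2 * ε / δ) *
          ((fun j => ‖f j‖ₑ) ⋆ₗ fun j => ENNReal.ofReal √(kpBracket j) * ‖g j‖ₑ) k) ^ 2 := by
        gcongr; exact enorm_conv_chiC_le hε hδ f g k
    _ = ENNReal.ofReal ((2 * ε / (c * δ)) ^ 2) *
          ((fun j => ‖f j‖ₑ) ⋆ₗ fun j => ENNReal.ofReal √(kpBracket j) * ‖g j‖ₑ) k ^ 2 := by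
        rw [mul_pow, ← mul_assoc, ← ENNReal.ofReal_pow (by positivity),
          ← ENNReal.ofReal_mul (by positivity)]
        congr 2
        field_simp

theorem eYnormSq_kpBilin_le {β δ θ : ℝ} (hβ : 1 / 3 < β) (hδ : 0 < δ) (hθ : 1 / 2 < θ)
    (hθ1 : θ ≤ 1) :
    ∃ K : ℝ≥0, ∀ ε > 0, ∀ f g : ℝ × ℝ → ℂ, Measurable f → Measurable g →
      eYnormSq (1 + θ) (kpBilin β ε δ f g) ≤
        K * ENNReal.ofReal ε ^ 2 * eYnormSq (1 + θ) f * eYnormSq (1 + θ) g := by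
  obtain ⟨c, hc, hm⟩ := exists_mul_kpBracket_le_mKP hβ
  set I := ∫⁻ k, ENNReal.ofReal (kpBracket k ^ (-(1 + θ)))
  have hI : I ≠ ∞ := (lintegral_kpBracket_rpow_neg_lt_top (by linarith)).ne
  refine ⟨(ENNReal.ofReal ((2 / (c * δ)) ^ 2) * I).toNNReal, fun ε hε f g hf hg => ?_⟩
  set H := fun j => ENNReal.ofReal √(kpBracket j) * ‖g j‖ₑ
  have hH : ∫⁻ j, H j ^ 2 = eYnormSq 1 g := lintegral_congr fun j => by
    rw [mul_pow, ← ENNReal.ofReal_pow (Real.sqrt_nonneg _),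
      Real.sq_sqrt (kpBracket_pos j).le, wgt_eq_kpBracket_rpow, Real.rpow_one]
  calc eYnormSq (1 + θ) (kpBilin β ε δ f g)
      ≤ ∫⁻ k, ENNReal.ofReal ((2 * ε / (c * δ)) ^ 2) * ((fun j => ‖f j‖ₑ) ⋆ₗ H) k ^ 2 :=
        lintegral_mono fun k =>
          ofReal_wgt_mul_enorm_kpBilin_sq_le hε hδ hc (by linarith) hm f g k
    _ = ENNReal.ofReal ((2 * ε / (c * δ)) ^ 2) * ∫⁻ k, ((fun j => ‖f j‖ₑ) ⋆ₗ H) k ^ 2 :=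
        lintegral_const_mul' _ _ ENNReal.ofReal_ne_top
    _ ≤ ENNReal.ofReal ((2 * ε / (c * δ)) ^ 2) * ((∫⁻ j, ‖f j‖ₑ) ^ 2 * ∫⁻ j, H j ^ 2) := by
        gcongr
        exact lintegral_lconvolution_sq_le hf.enorm (by fun_prop)
    _ ≤ ENNReal.ofReal ((2 * ε / (c * δ)) ^ 2) *
          (I * eYnormSq (1 + θ) f * eYnormSq (1 + θ) g) := by
        rw [hH]
        gcongr
        · exact sq_lintegral_enorm_le_mul_eYnormSq _ hf
        · exact eYnormSq_mono (by linarith) g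
    _ = _ := by
        rw [ENNReal.coe_toNNReal (ENNReal.mul_ne_top ENNReal.ofReal_ne_top hI),
          show (2 * ε / (c * δ)) ^ 2 = (2 / (c * δ)) ^ 2 * ε ^ 2 by ring,
          ENNReal.ofReal_mul (by positivity), ENNReal.ofReal_pow hε.le]
        ring

lemma sqrt_YnormSq_le_of_eYnormSq_le {r ε : ℝ} {K : ℝ≥0} {h f g : ℝ × ℝ → ℂ} (hε : 0 ≤ ε)
    (hh : AEStronglyMeasurable h) (hf : Integrable fun k => wgt r k * ‖f k‖ ^ 2)
    (hg : Integrable fun k => wgt r k * ‖g k‖ ^ 2)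
    (H : eYnormSq r h ≤ K * ENNReal.ofReal ε ^ 2 * eYnormSq r f * eYnormSq r g) :
    √(YnormSq r h) ≤ √K * ε * √(YnormSq r f) * √(YnormSq r g) := by
  have hYf : 0 ≤ YnormSq r f :=
    integral_nonneg fun k => mul_nonneg (wgt_nonneg r k) (sq_nonneg _)
  have hYg : 0 ≤ YnormSq r g :=
    integral_nonneg fun k => mul_nonneg (wgt_nonneg r k) (sq_nonneg _)
  have hK : (K : ℝ≥0∞) * ENNReal.ofReal ε ^ 2 * eYnormSq r f * eYnormSq r g =
      ENNReal.ofReal (K * ε ^ 2 * YnormSq r f * YnormSq r g) := by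
    rw [ENNReal.ofReal_mul (by positivity), ENNReal.ofReal_mul (by positivity),
      ENNReal.ofReal_mul (by positivity), ENNReal.ofReal_pow hε, ENNReal.ofReal_coe_nnreal,
      ofReal_YnormSq hf, ofReal_YnormSq hg]
  have hY : YnormSq r h ≤ K * ε ^ 2 * YnormSq r f * YnormSq r g := by
    rw [YnormSq_eq_toReal_eYnormSq hh]
    exact ENNReal.toReal_le_of_le_ofReal (by positivity) (H.trans_eq hK)
  calc √(YnormSq r h) ≤ √(K * ε ^ 2 * YnormSq r f * YnormSq r g) := Real.sqrt_le_sqrt hY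
    _ = √K * ε * √(YnormSq r f) * √(YnormSq r g) := by
        rw [Real.sqrt_mul (by positivity), Real.sqrt_mul (by positivity),
          Real.sqrt_mul K.coe_nonneg, Real.sqrt_sq hε]

theorem stmt9_general (β δ θ : ℝ) (hβ : 1 / 3 < β) (hδ : 0 < δ)
    (hθ : 1 / 2 < θ) (hθ1 : θ < 1) :
    ∃ C > (0 : ℝ), ∀ ε : ℝ, 0 < ε → ε < 1 → ∀ f g : ℝ × ℝ → ℂ,
      Measurable f → Measurable g →
      Integrable (fun k => wgt (1 + θ) k * ‖f k‖ ^ 2) →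
      Integrable (fun k => wgt (1 + θ) k * ‖g k‖ ^ 2) →
      Real.sqrt (YnormSq (1 + θ) (fun k => ((mKP β k : ℝ) : ℂ)⁻¹ * chiC ε δ k *
          conv (fun j => (chiC ε δ j + 1) * f j) (fun j => (chiC ε δ j - 1) * g j) k))
        ≤ C * ε * Real.sqrt (YnormSq (1 + θ) f) * Real.sqrt (YnormSq (1 + θ) g) := by
  obtain ⟨K, hK⟩ := eYnormSq_kpBilin_le hβ hδ hθ hθ1.le
  refine ⟨√K + 1, by positivity, fun ε hε _ f g hf hg hfi hgi => ?_⟩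
  calc √(YnormSq (1 + θ) (kpBilin β ε δ f g))
      ≤ √K * ε * √(YnormSq (1 + θ) f) * √(YnormSq (1 + θ) g) :=
        sqrt_YnormSq_le_of_eYnormSq_le hε.le
          (measurable_kpBilin β ε δ hf hg).aestronglyMeasurable hfi hgi (hK ε hε f g hf hg)
    _ ≤ (√K + 1) * ε * √(YnormSq (1 + θ) f) * √(YnormSq (1 + θ) g) := by
        gcongr; linarith

/-- Bilinear estimate (Lemma: `|m̃(D)⁻¹χ_ε(D)(((χ_ε(D)+I)ζ)((χ_ε(D)-I)ρ))|_{Y^{1+θ}}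
≲ ε |ζ|_{Y^{1+θ}} |ρ|_{Y^{1+θ}}` for θ ∈ (1/2,1)), stated on the Fourier side with the
physical-space product expressed as a convolution. -/
theorem stmt9 (β δ θ : ℝ) (hβ : 1 / 3 < β) (hδ : 0 < δ) (hδ1 : δ < 1)
    (hθ : 1 / 2 < θ) (hθ1 : θ < 1) :
    ∃ C > (0 : ℝ), ∀ ε : ℝ, 0 < ε → ε < 1 → ∀ f g : ℝ × ℝ → ℂ,
      Measurable f → Measurable g →
      Integrable (fun k => wgt (1 + θ) k * ‖f k‖ ^ 2) →
      Integrable (fun k => wgt (1 + θ) k * ‖g k‖ ^ 2) →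
      Real.sqrt (YnormSq (1 + θ) (fun k => ((mKP β k : ℝ) : ℂ)⁻¹ * chiC ε δ k *
          conv (fun j => (chiC ε δ j + 1) * f j) (fun j => (chiC ε δ j - 1) * g j) k))
        ≤ C * ε * Real.sqrt (YnormSq (1 + θ) f) * Real.sqrt (YnormSq (1 + θ) g) :=
  stmt9_general β δ θ hβ hδ hθ hθ1
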